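/- The median of three function median(a, b, c) on [0,1] is monotone nondecreasing in each argument, and for fixed b, the single-agent mechanism x ↦ median(x, b, x) = x together with the n-agent mechanism (x_1,…,x_n) ↦ median(min_i x_i, b, max_i x_i) is strategy proof: no agent can misreport to bring the returned point strictly closer to their true location. -/
import Mathlib


/-- The median of three reals. -/
noncomputable def med3 (a b c : ℝ) : ℝ := max (min a b) (min (max a b) c)

/-- The mechanism with parameter b: median of the leftmost report, b,
and the rightmost report. -/
noncomputable def mech (b : ℝ) {n : ℕ} (x : Fin (n + 1) → ℝ) : ℝ :=
  med3 (Finset.univ.inf' Finset.univ_nonempty x) b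
    (Finset.univ.sup' Finset.univ_nonempty x)

lemma med3_clamp (m b M : ℝ) (h : m ≤ M) : med3 m b M = max m (min b M) := by
  simp only [med3, min_def, max_def]
  split_ifs <;> linarith

/-- The median of three is monotone in each argument; median(x, b, x) = x; and
the mechanism (x₁,…,xₙ) ↦ median(minᵢ xᵢ, b, maxᵢ xᵢ) is strategy proof. -/
theorem stmt_18 (b : ℝ) (hb : b ∈ Set.Icc (0 : ℝ) 1) :
    (∀ b' c : ℝ, Monotone (fun a => med3 a b' c)) ∧
    (∀ a c : ℝ, Monotone (fun b' => med3 a b' c)) ∧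
    (∀ a b' : ℝ, Monotone (fun c => med3 a b' c)) ∧
    (∀ x : ℝ, med3 x b x = x) ∧
    (∀ (n : ℕ) (x : Fin (n + 1) → ℝ), (∀ i, x i ∈ Set.Icc (0 : ℝ) 1) →
      ∀ (i : Fin (n + 1)) (x' : ℝ), x' ∈ Set.Icc (0 : ℝ) 1 →
        |x i - mech b x| ≤ |x i - mech b (Function.update x i x')|) := by
  refine ⟨?_, ?_, ?_, ?_, ?_⟩
  · intro b' c u v h
    exact max_le_max (min_le_min h le_rfl) (min_le_min (max_le_max h le_rfl) le_rfl)
  · intro a c u v h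
    exact max_le_max (min_le_min le_rfl h) (min_le_min (max_le_max le_rfl h) le_rfl)
  · intro a b' u v h
    exact max_le_max le_rfl (min_le_min le_rfl h)
  · intro x
    simp [med3, min_eq_right (le_max_left x b), max_eq_right (min_le_left x b)]
  · intro n x hx i x' hx'
    set m := Finset.univ.inf' Finset.univ_nonempty x with hm
    set M := Finset.univ.sup' Finset.univ_nonempty x with hM
    set y := Function.update x i x' with hy
    set m' := Finset.univ.inf' Finset.univ_nonempty y with hm'
    set M' := Finset.univ.sup' Finset.univ_nonempty y with hM'
    have hmM : m ≤ M := le_trans (Finset.inf'_le _ (Finset.mem_univ i))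
      (Finset.le_sup' _ (Finset.mem_univ i))
    have hm'M' : m' ≤ M' := le_trans (Finset.inf'_le _ (Finset.mem_univ i))
      (Finset.le_sup' _ (Finset.mem_univ i))
    have hmech : mech b x = max m (min b M) := med3_clamp m b M hmM
    have hmech' : mech b y = max m' (min b M') := med3_clamp m' b M' hm'M'
    have hmi : m ≤ x i := Finset.inf'_le _ (Finset.mem_univ i)
    have hMi : x i ≤ M := Finset.le_sup' _ (Finset.mem_univ i)
    rcases lt_trichotomy (mech b x) (x i) with hlt | heq | hgt
    · -- output left of agent i: misreport can't move output right past it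
      -- min m is attained by some j ≠ i
      obtain ⟨j, -, hj⟩ := Finset.exists_mem_eq_inf' (Finset.univ_nonempty) x
      have hji : j ≠ i := by
        intro h; rw [h] at hj
        have : m ≤ mech b x := by rw [hmech]; exact le_max_left _ _
        rw [← hm] at hj; linarith [hj ▸ this]
      have hm'le : m' ≤ m := by
        have := Finset.inf'_le y (Finset.mem_univ j)
        rwa [hy, Function.update_of_ne hji, ← hj, ← hm] at this
      have hble : min b M' ≤ min b M := by
        have hbxi : b < x i := by
          by_contra hc
          push_neg at hc
          have : min b M = M ⊓ b := min_comm b M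
          have : mech b x ≥ x i := by
            rw [hmech]
            calc x i ≤ min b M := le_min hc hMi
            _ ≤ max m (min b M) := le_max_right _ _
          linarith
        calc min b M' ≤ b := min_le_left _ _
        _ = min b M := (min_eq_left (le_of_lt (lt_of_lt_of_le hbxi hMi))).symm
      have hq : mech b y ≤ mech b x := by
        rw [hmech, hmech']
        exact max_le_max hm'le hble
      rw [abs_of_pos (by linarith), abs_sub_comm]
      calc x i - mech b x ≤ x i - mech b y := by linarith
        _ ≤ |mech b y - x i| := by rw [abs_sub_comm]; exact le_abs_self _
    · simp [heq]
    · -- output right of agent i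
      obtain ⟨j, -, hj⟩ := Finset.exists_mem_eq_sup' (Finset.univ_nonempty) x
      have hpM : mech b x ≤ M := by
        rw [hmech]
        exact max_le hmM (min_le_right _ _)
      have hji : j ≠ i := by
        intro h; rw [h] at hj
        rw [← hM] at hj
        have : x i < M := lt_of_lt_of_le hgt hpM
        rw [← hj] at this; exact lt_irrefl _ this
      have hM'ge : M ≤ M' := by
        have := Finset.le_sup' y (Finset.mem_univ j)
        rwa [hy, Function.update_of_ne hji, ← hj, ← hM] at this
      have hp : mech b x = min b M := by
        rw [hmech, max_eq_right]
        by_contra hc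
        push_neg at hc
        have : mech b x ≤ m := by rw [hmech, max_eq_left hc.le]
        linarith
      have hq : mech b x ≤ mech b y := by
        rw [hmech', hp]
        calc min b M ≤ min b M' := min_le_min le_rfl hM'ge
          _ ≤ max m' (min b M') := le_max_right _ _
      rw [abs_sub_comm, abs_of_pos (by linarith)]
      calc mech b x - x i ≤ mech b y - x i := by linarith
        _ ≤ |x i - mech b y| := by rw [abs_sub_comm]; exact le_abs_self _
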